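/- Let f be a smooth even function on the real line. Then there exists a continuous function g on the real line, smooth away from the origin, such that f(x) = g(x²) for all real x. -/
import Mathlib


/-- Whitney's lemma (weak form): a smooth even function `f` on the real line
can be written as `f x = g (x^2)` with `g` continuous on `ℝ` and smooth away
from the origin. -/
theorem whitney_even_function (f : ℝ → ℝ)
    (hf : ContDiff ℝ (⊤ : ℕ∞) f) (heven : ∀ x : ℝ, f (-x) = f x) :
    ∃ g : ℝ → ℝ, Continuous g ∧ ContDiffOn ℝ (⊤ : ℕ∞) g {(0 : ℝ)}ᶜ ∧
      ∀ x : ℝ, f x = g (x ^ 2) := by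
  refine ⟨fun y => f (Real.sqrt y), hf.continuous.comp Real.continuous_sqrt, ?_, ?_⟩
  · intro y hy
    have hy0 : y ≠ 0 := hy
    rcases lt_or_gt_of_ne hy0 with h | h
    · -- y < 0 : locally constant equal to f 0
      have hev : (fun z => f (Real.sqrt z)) =ᶠ[nhds y] fun _ => f 0 := by
        filter_upwards [Iio_mem_nhds h] with z hz
        rw [Real.sqrt_eq_zero_of_nonpos (le_of_lt hz)]
      exact ((contDiffAt_const (c := f 0)).congr_of_eventuallyEq hev).contDiffWithinAt
    · -- y > 0 : sqrt is smooth there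
      exact ((hf.contDiffAt.comp y (Real.contDiffAt_sqrt (ne_of_gt h)))).contDiffWithinAt
  · intro x
    show f x = f (Real.sqrt (x ^ 2))
    rw [Real.sqrt_sq_eq_abs]
    rcases abs_cases x with ⟨h, _⟩ | ⟨h, _⟩
    · rw [h]
    · rw [h, heven]
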